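/- Let Ω ⊆ ℝ² be open. Let e_s : Ω → ℂ² and e_z, h_z : Ω → ℂ be smooth, let μ_s : Ω → M₂(ℂ) be a smooth field of invertible 2×2 matrices, let h_s : Ω → ℂ² be smooth, and let ε_cz : Ω → ℂ. Let ω, μ₀, ε₀, k_z be complex constants with ω·μ₀ ≠ 0, and set k₀² = ω²·μ₀·ε₀. Suppose on Ω: (i) Curl e_z + i·k_z·J(e_s) = i·ω·μ₀·(μ_s·h_s); (ii) curl h_s = −i·ω·ε₀·ε_cz·e_z. Then on Ω: div(ν·grad e_z) − i·k_z·div(ν·e_s) + k₀²·ε_cz·e_z = 0, where ν = J ∘ μ_s⁻¹ ∘ J⁻¹ is the 90°-rotation conjugate of μ_s⁻¹. -/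

import Mathlib

noncomputable section

/-- Partial derivative in the first coordinate direction. -/
def pd1 (f : ℝ × ℝ → ℂ) (p : ℝ × ℝ) : ℂ := fderiv ℝ f p (1, 0)

/-- Partial derivative in the second coordinate direction. -/
def pd2 (f : ℝ × ℝ → ℂ) (p : ℝ × ℝ) : ℂ := fderiv ℝ f p (0, 1)

/-- Transverse gradient of a scalar field: grad f = (∂₁ f, ∂₂ f). -/
def tgrad (f : ℝ × ℝ → ℂ) (p : ℝ × ℝ) : ℂ × ℂ := (pd1 f p, pd2 f p)

/-- Vector curl of a scalar field: Curl f = (∂₂ f, −∂₁ f). -/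
def vCurl (f : ℝ × ℝ → ℂ) (p : ℝ × ℝ) : ℂ × ℂ := (pd2 f p, -pd1 f p)

/-- Scalar curl of a vector field: curl u = ∂₁ u₂ − ∂₂ u₁. -/
def sCurl (u : ℝ × ℝ → ℂ × ℂ) (p : ℝ × ℝ) : ℂ :=
  pd1 (fun q => (u q).2) p - pd2 (fun q => (u q).1) p

/-- Divergence of a vector field: div u = ∂₁ u₁ + ∂₂ u₂. -/
def tdiv (u : ℝ × ℝ → ℂ × ℂ) (p : ℝ × ℝ) : ℂ :=
  pd1 (fun q => (u q).1) p + pd2 (fun q => (u q).2) p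

/-- 90° rotation J(v₁, v₂) = (−v₂, v₁), i.e. ẑ × v. -/
def Jrot (v : ℂ × ℂ) : ℂ × ℂ := (-v.2, v.1)

/-- Inverse of the 90° rotation: J⁻¹(v₁, v₂) = (v₂, −v₁). -/
def JrotInv (v : ℂ × ℂ) : ℂ × ℂ := (v.2, -v.1)

/-- Action of a 2×2 complex matrix on a pair. -/
def matVec (A : Matrix (Fin 2) (Fin 2) ℂ) (v : ℂ × ℂ) : ℂ × ℂ :=
  (A 0 0 * v.1 + A 0 1 * v.2, A 1 0 * v.1 + A 1 1 * v.2)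

namespace S13

lemma pd1_congr {f g : ℝ × ℝ → ℂ} {p : ℝ × ℝ} (h : f =ᶠ[nhds p] g) :
    pd1 f p = pd1 g p := by unfold pd1; rw [h.fderiv_eq]

lemma pd2_congr {f g : ℝ × ℝ → ℂ} {p : ℝ × ℝ} (h : f =ᶠ[nhds p] g) :
    pd2 f p = pd2 g p := by unfold pd2; rw [h.fderiv_eq]

lemma pd1_neg (f : ℝ × ℝ → ℂ) (p : ℝ × ℝ) :
    pd1 (fun q => -f q) p = -pd1 f p := by unfold pd1; rw [fderiv_fun_neg]; rfl

lemma pd2_neg (f : ℝ × ℝ → ℂ) (p : ℝ × ℝ) :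
    pd2 (fun q => -f q) p = -pd2 f p := by unfold pd2; rw [fderiv_fun_neg]; rfl

lemma pd1_cmul {f : ℝ × ℝ → ℂ} {p : ℝ × ℝ} (c : ℂ)
    (hf : DifferentiableAt ℝ f p) :
    pd1 (fun q => c * f q) p = c * pd1 f p := by
  unfold pd1; rw [fderiv_const_mul hf c]; rfl

lemma pd2_cmul {f : ℝ × ℝ → ℂ} {p : ℝ × ℝ} (c : ℂ)
    (hf : DifferentiableAt ℝ f p) :
    pd2 (fun q => c * f q) p = c * pd2 f p := by
  unfold pd2; rw [fderiv_const_mul hf c]; rfl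

lemma pd1_sub_cmul {f g : ℝ × ℝ → ℂ} {p : ℝ × ℝ} (c : ℂ)
    (hf : DifferentiableAt ℝ f p) (hg : DifferentiableAt ℝ g p) :
    pd1 (fun q => f q - c * g q) p = pd1 f p - c * pd1 g p := by
  unfold pd1
  rw [fderiv_fun_sub hf (hg.const_mul c)]
  simp only [ContinuousLinearMap.sub_apply]
  rw [fderiv_const_mul hg c]; rfl

lemma pd2_sub_cmul {f g : ℝ × ℝ → ℂ} {p : ℝ × ℝ} (c : ℂ)
    (hf : DifferentiableAt ℝ f p) (hg : DifferentiableAt ℝ g p) :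
    pd2 (fun q => f q - c * g q) p = pd2 f p - c * pd2 g p := by
  unfold pd2
  rw [fderiv_fun_sub hf (hg.const_mul c)]
  simp only [ContinuousLinearMap.sub_apply]
  rw [fderiv_const_mul hg c]; rfl

lemma matVec_inv (A : Matrix (Fin 2) (Fin 2) ℂ) (v : ℂ × ℂ) :
    matVec A⁻¹ v = ((A.det)⁻¹ * (A 1 1 * v.1 - A 0 1 * v.2),
                    (A.det)⁻¹ * (A 0 0 * v.2 - A 1 0 * v.1)) := by
  rw [Matrix.inv_def, Matrix.adjugate_fin_two, Ring.inverse_eq_inv]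
  simp [matVec, Matrix.smul_apply, smul_eq_mul]
  constructor <;> ring

lemma matVec_matVec (A B : Matrix (Fin 2) (Fin 2) ℂ) (v : ℂ × ℂ) :
    matVec A (matVec B v) = matVec (A * B) v := by
  simp [matVec, Matrix.mul_apply, Fin.sum_univ_two]
  constructor <;> ring

lemma matVec_one (v : ℂ × ℂ) : matVec 1 v = v := by
  simp [matVec, Matrix.one_apply]

lemma matVec_smul (A : Matrix (Fin 2) (Fin 2) ℂ) (c : ℂ) (v : ℂ × ℂ) :
    matVec A (c • v) = c • matVec A v := by
  simp [matVec, Prod.smul_def, smul_eq_mul]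
  constructor <;> ring

lemma contDiffAt_pd1 {f : ℝ × ℝ → ℂ} {Ω : Set (ℝ × ℝ)} (hΩ : IsOpen Ω)
    (hf : ContDiffOn ℝ (⊤ : ℕ∞) f Ω) {p : ℝ × ℝ} (hp : p ∈ Ω) :
    ContDiffAt ℝ (⊤ : ℕ∞) (pd1 f) p :=
  (((hf.contDiffAt (hΩ.mem_nhds hp)).fderiv_right (m := (⊤ : ℕ∞)) (by simp)).clm_apply
    contDiffAt_const)

lemma contDiffAt_pd2 {f : ℝ × ℝ → ℂ} {Ω : Set (ℝ × ℝ)} (hΩ : IsOpen Ω)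
    (hf : ContDiffOn ℝ (⊤ : ℕ∞) f Ω) {p : ℝ × ℝ} (hp : p ∈ Ω) :
    ContDiffAt ℝ (⊤ : ℕ∞) (pd2 f) p :=
  (((hf.contDiffAt (hΩ.mem_nhds hp)).fderiv_right (m := (⊤ : ℕ∞)) (by simp)).clm_apply
    contDiffAt_const)

lemma diffAt_matVecInv {μs : ℝ × ℝ → Matrix (Fin 2) (Fin 2) ℂ} {p : ℝ × ℝ}
    (hA : ∀ i j, ContDiffAt ℝ (⊤ : ℕ∞) (fun q => μs q i j) p)
    (hdet : (μs p).det ≠ 0)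
    {F1 F2 : ℝ × ℝ → ℂ} (hF1 : DifferentiableAt ℝ F1 p)
    (hF2 : DifferentiableAt ℝ F2 p) :
    DifferentiableAt ℝ (fun q => (matVec (μs q)⁻¹ (F1 q, F2 q)).1) p ∧
      DifferentiableAt ℝ (fun q => (matVec (μs q)⁻¹ (F1 q, F2 q)).2) p := by
  have hd : DifferentiableAt ℝ (fun q => (μs q).det) p := by
    simp only [Matrix.det_fin_two]
    exact (((hA 0 0).differentiableAt (by simp)).mul
      ((hA 1 1).differentiableAt (by simp))).sub
      (((hA 0 1).differentiableAt (by simp)).mul ((hA 1 0).differentiableAt (by simp)))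
  have hdi := hd.inv hdet
  simp only [matVec_inv]
  exact ⟨hdi.mul ((((hA 1 1).differentiableAt (by simp)).mul hF1).sub
            (((hA 0 1).differentiableAt (by simp)).mul hF2)),
         hdi.mul ((((hA 0 0).differentiableAt (by simp)).mul hF2).sub
            (((hA 1 0).differentiableAt (by simp)).mul hF1))⟩

end S13

open S13

/-- The scalar Helmholtz equation (2-9b) follows from the transverse Maxwell
relations (2-8b) and (2-8c), with ν = J ∘ μ_s⁻¹ ∘ J⁻¹. -/
theorem stmt_13 (Ω : Set (ℝ × ℝ)) (hΩ : IsOpen Ω)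
    (es : ℝ × ℝ → ℂ × ℂ) (ez hz : ℝ × ℝ → ℂ)
    (hes : ContDiffOn ℝ (⊤ : ℕ∞) es Ω)
    (hez : ContDiffOn ℝ (⊤ : ℕ∞) ez Ω) (hhz : ContDiffOn ℝ (⊤ : ℕ∞) hz Ω)
    (μs : ℝ × ℝ → Matrix (Fin 2) (Fin 2) ℂ)
    (hμs : ∀ i j, ContDiffOn ℝ (⊤ : ℕ∞) (fun p => μs p i j) Ω)
    (hμsinv : ∀ p ∈ Ω, IsUnit (μs p).det)
    (hs : ℝ × ℝ → ℂ × ℂ) (hhs : ContDiffOn ℝ (⊤ : ℕ∞) hs Ω)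
    (εcz : ℝ × ℝ → ℂ)
    (ω μ₀ ε₀ kz : ℂ) (hωμ : ω * μ₀ ≠ 0)
    (hi : ∀ p ∈ Ω, vCurl ez p + (Complex.I * kz) • Jrot (es p)
            = (Complex.I * ω * μ₀) • matVec (μs p) (hs p))
    (hii : ∀ p ∈ Ω, sCurl hs p = -(Complex.I * ω * ε₀) * εcz p * ez p) :
    ∀ p ∈ Ω,
      tdiv (fun q => Jrot (matVec (μs q)⁻¹ (JrotInv (tgrad ez q)))) p
        - Complex.I * kz * tdiv (fun q => Jrot (matVec (μs q)⁻¹ (JrotInv (es q)))) p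
        + ω ^ 2 * μ₀ * ε₀ * εcz p * ez p = 0 := by

  intro p hp
  have hnhds : Ω ∈ nhds p := hΩ.mem_nhds hp
  have hdet : (μs p).det ≠ 0 := (hμsinv p hp).ne_zero
  have hA : ∀ i j, ContDiffAt ℝ (⊤ : ℕ∞) (fun q => μs q i j) p :=
    fun i j => (hμs i j).contDiffAt hnhds
  -- differentiability of scalar building blocks
  have hez1 : DifferentiableAt ℝ (pd1 ez) p :=
    (contDiffAt_pd1 hΩ hez hp).differentiableAt (by simp)
  have hez2 : DifferentiableAt ℝ (pd2 ez) p :=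
    (contDiffAt_pd2 hΩ hez hp).differentiableAt (by simp)
  have hesd : DifferentiableAt ℝ es p :=
    (hes.contDiffAt hnhds).differentiableAt (by simp)
  have hes1 : DifferentiableAt ℝ (fun q => (es q).1) p := hesd.fst
  have hes2 : DifferentiableAt ℝ (fun q => (es q).2) p := hesd.snd
  have hhsd : DifferentiableAt ℝ hs p :=
    (hhs.contDiffAt hnhds).differentiableAt (by simp)
  have hhs1 : DifferentiableAt ℝ (fun q => (hs q).1) p := hhsd.fst
  have hhs2 : DifferentiableAt ℝ (fun q => (hs q).2) p := hhsd.snd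
  -- the two transverse vector fields
  have hG1 := diffAt_matVecInv hA hdet hez2 hez1.fun_neg
  have hG2 := diffAt_matVecInv hA hdet hes2 hes1.fun_neg
  -- consequence of Maxwell relation (i)
  have hw : ∀ q ∈ Ω,
      matVec (μs q)⁻¹ (pd2 ez q, -pd1 ez q)
        - (Complex.I * kz) • matVec (μs q)⁻¹ ((es q).2, -(es q).1)
        = (Complex.I * ω * μ₀) • hs q := by
    intro q hq
    have h : matVec (μs q)⁻¹ (vCurl ez q + (Complex.I * kz) • Jrot (es q))
        = (Complex.I * ω * μ₀) • hs q := by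
      rw [hi q hq, matVec_smul, matVec_matVec,
        Matrix.nonsing_inv_mul _ (hμsinv q hq), matVec_one]
    rw [← h]
    simp only [matVec, vCurl, Jrot, Prod.smul_def, smul_eq_mul, Prod.mk_add_mk,
      Prod.mk_sub_mk, Prod.mk.injEq]
    constructor <;> ring
  -- eventually-eq facts for the two component functions
  have e1 : (fun q => -(matVec (μs q)⁻¹ (pd2 ez q, -pd1 ez q)).2
        - Complex.I * kz * (-(matVec (μs q)⁻¹ ((es q).2, -(es q).1)).2))
      =ᶠ[nhds p] (fun q => (Complex.I * ω * μ₀) * (-(hs q).2)) := by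
    filter_upwards [hnhds] with q hq
    have h := congrArg Prod.snd (hw q hq)
    simp only [Prod.snd_sub, Prod.smul_snd, smul_eq_mul] at h
    linear_combination -h
  have e2 : (fun q => (matVec (μs q)⁻¹ (pd2 ez q, -pd1 ez q)).1
        - Complex.I * kz * (matVec (μs q)⁻¹ ((es q).2, -(es q).1)).1)
      =ᶠ[nhds p] (fun q => (Complex.I * ω * μ₀) * (hs q).1) := by
    filter_upwards [hnhds] with q hq
    have h := congrArg Prod.fst (hw q hq)
    simp only [Prod.fst_sub, Prod.smul_fst, smul_eq_mul] at h
    linear_combination h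
  -- identify the divergences with pd's of the component functions
  have hT1 : tdiv (fun q => Jrot (matVec (μs q)⁻¹ (JrotInv (tgrad ez q)))) p
      = pd1 (fun q => -(matVec (μs q)⁻¹ (pd2 ez q, -pd1 ez q)).2) p
        + pd2 (fun q => (matVec (μs q)⁻¹ (pd2 ez q, -pd1 ez q)).1) p := rfl
  have hT2 : tdiv (fun q => Jrot (matVec (μs q)⁻¹ (JrotInv (es q)))) p
      = pd1 (fun q => -(matVec (μs q)⁻¹ ((es q).2, -(es q).1)).2) p
        + pd2 (fun q => (matVec (μs q)⁻¹ ((es q).2, -(es q).1)).1) p := rfl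
  -- compute the first-component combination
  have E1 : pd1 (fun q => -(matVec (μs q)⁻¹ (pd2 ez q, -pd1 ez q)).2) p
        - Complex.I * kz * pd1 (fun q => -(matVec (μs q)⁻¹ ((es q).2, -(es q).1)).2) p
      = (Complex.I * ω * μ₀) * (-(pd1 (fun q => (hs q).2) p)) := by
    rw [← pd1_sub_cmul (Complex.I * kz) hG1.2.fun_neg hG2.2.fun_neg, pd1_congr e1,
      pd1_cmul _ hhs2.fun_neg, pd1_neg]
  have E2 : pd2 (fun q => (matVec (μs q)⁻¹ (pd2 ez q, -pd1 ez q)).1) p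
        - Complex.I * kz * pd2 (fun q => (matVec (μs q)⁻¹ ((es q).2, -(es q).1)).1) p
      = (Complex.I * ω * μ₀) * (pd2 (fun q => (hs q).1) p) := by
    rw [← pd2_sub_cmul (Complex.I * kz) hG1.1 hG2.1, pd2_congr e2,
      pd2_cmul _ hhs1]
  have hcurl := hii p hp
  unfold sCurl at hcurl
  rw [hT1, hT2]
  have hI := Complex.I_sq
  linear_combination E1 + E2 - (Complex.I * ω * μ₀) * hcurl
    + (ω ^ 2 * μ₀ * ε₀ * εcz p * ez p) * hI
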